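/- Let I and P be posets and F a map assigning to each x ∈ I a downset F(x) ⊆ P, with F(x) ⊆ F(y) whenever x ≤ y. Let Q := ∪_{x∈I} F(x), regarded as a full subposet of P, let S := {(x,q) ∈ I × P | q ∈ F(x)} with the componentwise order, and let π : S → Q be the projection (x,q) ↦ q. If for every q ∈ Q the subposet I_q := {x ∈ I | q ∈ F(x)} of I is connected, then π is a final functor; that is, for every q ∈ Q the comma poset {(x,p) ∈ S | q ≤ p} is nonempty and connected. -/

import Mathlib

/-!
For `q ∈ Q`, an object of the comma poset `(q ↓ π)` is a pair `(x, p)` with `p ∈ F(x)` and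
`q ≤ p`; since `F(x)` is a downset, `x ∈ I_q`. The map `(x, p) ↦ x` to `I_q` is right adjoint
to `x ↦ (x, q)`, since `(x', q) ≤ (x, p)` holds exactly when `x' ≤ x`. Right adjoints are
final, and final functors reflect connectedness, so `(q ↓ π)` is connected because `I_q` is.
-/

open CategoryTheory

universe w

namespace HeightInterleaving

/-- The projection `π : S ⥤ Q` from the poset
`S = {(x, q) ∈ I × P ∣ q ∈ F(x)}` (with the componentwise order) to
`Q = ⋃_{x ∈ I} F(x)`, given by `(x, q) ↦ q`. -/
def grothendieckProj {I P : Type w} [PartialOrder I] [PartialOrder P] (F : I → Set P) :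
    {xq : I × P // xq.2 ∈ F xq.1} ⥤ ↥(⋃ x : I, F x) :=
  Monotone.functor
    (f := fun s => ⟨s.1.2, Set.mem_iUnion.2 ⟨s.1.1, s.2⟩⟩)
    (fun _ _ h => h.2)

instance _root_.CategoryTheory.StructuredArrow.isThin {C D : Type*} [Category C] [Category D]
    [Quiver.IsThin D] (c : C) (T : D ⥤ C) : Quiver.IsThin (StructuredArrow c T) :=
  fun _ _ => ⟨fun _ _ => StructuredArrow.hom_ext _ _ (Subsingleton.elim _ _)⟩

section

variable {I P : Type w} [PartialOrder I] [PartialOrder P] {F : I → Set P}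

def fiberToStructuredArrow (q : ↥(⋃ x : I, F x)) :
    ↥{x : I | (q : P) ∈ F x} ⥤ StructuredArrow q (grothendieckProj F) where
  obj x := StructuredArrow.mk (Y := ⟨(x.1, q), x.2⟩) (homOfLE le_rfl)
  map f := StructuredArrow.homMk (homOfLE ⟨by exact f.le, le_rfl⟩) (Subsingleton.elim _ _)

def structuredArrowToFiber (hF : ∀ x, IsLowerSet (F x)) (q : ↥(⋃ x : I, F x)) :
    StructuredArrow q (grothendieckProj F) ⥤ ↥{x : I | (q : P) ∈ F x} where
  obj j := ⟨j.right.1.1, hF _ j.hom.le j.right.2⟩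
  map f := homOfLE f.right.le.1

def fiberAdjunction (hF : ∀ x, IsLowerSet (F x)) (q : ↥(⋃ x : I, F x)) :
    fiberToStructuredArrow q ⊣ structuredArrowToFiber hF q :=
  Adjunction.mkOfHomEquiv
    { homEquiv _ j := equivOfSubsingletonOfSubsingleton
        (fun f => homOfLE f.right.le.1)
        (fun f => StructuredArrow.homMk (homOfLE ⟨by exact f.le, by exact j.hom.le⟩)
          (Subsingleton.elim _ _))
      homEquiv_naturality_left_symm _ _ := Subsingleton.elim _ _
      homEquiv_naturality_right _ _ := Subsingleton.elim _ _ }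

end

theorem statement_11_general {I P : Type w} [PartialOrder I] [PartialOrder P] (F : I → Set P)
    (hdownset : ∀ x : I, ∀ ⦃y z : P⦄, y ≤ z → z ∈ F x → y ∈ F x)
    (hconn : ∀ q ∈ ⋃ x : I, F x, IsConnected ↥{x : I | q ∈ F x}) :
    Functor.Final (grothendieckProj F) := by
  have hF : ∀ x, IsLowerSet (F x) := fun x _ _ hle hmem => hdownset x hle hmem
  refine ⟨fun q => ?_⟩
  have := Functor.final_of_adjunction (fiberAdjunction hF q)
  exact (Functor.isConnected_iff_of_final (structuredArrowToFiber hF q)).2 (hconn q q.2)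

/-- Let `F` assign to each `x ∈ I` a downset `F(x) ⊆ P`, monotonely in
`x`. If for every `q ∈ Q := ⋃_x F(x)` the subposet `I_q = {x ∈ I ∣ q ∈ F(x)}` is
connected, then the projection `π : S ⥤ Q`, `(x, q) ↦ q`, is a final functor (i.e. every
comma poset `(q ↓ π)` is nonempty and connected). -/
theorem statement_11 {I P : Type w} [PartialOrder I] [PartialOrder P] (F : I → Set P)
    (hdownset : ∀ x : I, ∀ ⦃y z : P⦄, y ≤ z → z ∈ F x → y ∈ F x)
    (hmono : ∀ ⦃x y : I⦄, x ≤ y → F x ⊆ F y)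
    (hconn : ∀ q ∈ ⋃ x : I, F x, IsConnected ↥{x : I | q ∈ F x}) :
    Functor.Final (grothendieckProj F) :=
  statement_11_general F hdownset hconn

end HeightInterleaving
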